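/- Let G be a group and let φ : P → Q be a ℤ[G]-module homomorphism between finitely generated ℤ[G]-modules. Let ‖·‖_P and ‖·‖_Q be filling norms on P and Q, induced by surjections onto P and Q from based finitely generated free ℤ[G]-modules. If P is a projective ℤ[G]-module, then there exists a constant C > 0 such that ‖φ(p)‖_Q ≤ C·‖p‖_P for all p ∈ P. -/

import Mathlib

/-- The ℓ1-norm on the based finitely generated free `ℤ[G]`-module `Fin r →₀ ℤ[G]`,
induced by the free `ℤ`-basis `{g • eᵢ}`: `‖x‖₁ = ∑_{i,g} |x_{i,g}|`. -/
noncomputable def l1 {G : Type*} [Group G] {r : ℕ}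
    (x : Fin r →₀ MonoidAlgebra ℤ G) : ℕ :=
  x.sum fun _ a => Finsupp.sum a.coeff fun _ z => z.natAbs

/-- The filling norm on `M` induced by a surjection `η` from a based finitely
generated free `ℤ[G]`-module: `‖m‖_η = min { ‖x‖₁ : η x = m }`. -/
noncomputable def fillNorm {G : Type*} [Group G] {r : ℕ}
    {M : Type*} [AddCommGroup M] [Module (MonoidAlgebra ℤ G) M]
    (η : (Fin r →₀ MonoidAlgebra ℤ G) →ₗ[MonoidAlgebra ℤ G] M) (m : M) : ℕ :=
  sInf {n : ℕ | ∃ x, η x = m ∧ l1 x = n}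

/-!
Lift `φ ∘ ηP` through the surjection `ηQ` to a `ℤ[G]`-linear map `ψ` between the free modules
(free modules are projective). The ℓ1-norm on `ℤ[G]` is submultiplicative, so
`‖ψ x‖₁ ≤ ∑ᵢ ‖xᵢ‖₁ ‖ψ eᵢ‖₁ ≤ (maxᵢ ‖ψ eᵢ‖₁) ‖x‖₁`; applying this to a minimal representative `x`
of `p` bounds `‖φ p‖_Q` by a constant times `‖p‖_P`.
-/

open Finset

lemma Finsupp.sum_add_le {α M N : Type*} [AddCommMonoid M] [AddCommMonoid N] [PartialOrder N]
    [IsOrderedAddMonoid N] (f g : α →₀ M) (h : α → M → N) (h_zero : ∀ a, h a 0 = 0)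
    (h_add : ∀ a x y, h a (x + y) ≤ h a x + h a y) :
    (f + g).sum h ≤ f.sum h + g.sum h := by
  classical
  rw [Finsupp.sum_of_support_subset f subset_union_left h fun a _ => h_zero a,
    Finsupp.sum_of_support_subset g subset_union_right h fun a _ => h_zero a,
    Finsupp.sum_of_support_subset _ Finsupp.support_add h fun a _ => h_zero a,
    ← Finset.sum_add_distrib]
  exact Finset.sum_le_sum fun a _ => h_add a (f a) (g a)

section GroupRing

variable {M : Type*}

noncomputable def l1Norm (c : MonoidAlgebra ℤ M) : ℕ :=
  c.coeff.sum fun _ z => z.natAbs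

@[simp]
lemma l1Norm_zero : l1Norm (0 : MonoidAlgebra ℤ M) = 0 := by
  simp [l1Norm]

lemma l1Norm_add_le (c d : MonoidAlgebra ℤ M) : l1Norm (c + d) ≤ l1Norm c + l1Norm d :=
  Finsupp.sum_add_le _ _ _ (fun _ => Int.natAbs_zero) fun _ => Int.natAbs_add_le

lemma l1Norm_single (m : M) (z : ℤ) : l1Norm (MonoidAlgebra.single m z) = z.natAbs := by
  simp [l1Norm]

lemma l1Norm_mul_le [Mul M] (c d : MonoidAlgebra ℤ M) : l1Norm (c * d) ≤ l1Norm c * l1Norm d := by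
  rw [MonoidAlgebra.mul_def]
  refine (le_sum_of_subadditive l1Norm l1Norm_zero.le l1Norm_add_le _ _).trans ?_
  simp only [l1Norm, Finsupp.sum, sum_mul_sum, ← Int.natAbs_mul]
  refine sum_le_sum fun g _ =>
    (le_sum_of_subadditive l1Norm l1Norm_zero.le l1Norm_add_le _ _).trans_eq ?_
  simp only [l1Norm_single]

end GroupRing

section FreeModule

variable {G : Type*} [Group G] {r : ℕ}

lemma l1_eq_sum (x : Fin r →₀ MonoidAlgebra ℤ G) : l1 x = ∑ i, l1Norm (x i) :=
  Finsupp.sum_fintype _ _ fun _ => l1Norm_zero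

lemma l1_zero : l1 (0 : Fin r →₀ MonoidAlgebra ℤ G) = 0 := by
  simp [l1_eq_sum]

lemma l1_add_le (x y : Fin r →₀ MonoidAlgebra ℤ G) : l1 (x + y) ≤ l1 x + l1 y := by
  simp only [l1_eq_sum, Finsupp.add_apply, ← sum_add_distrib]
  exact sum_le_sum fun i _ => l1Norm_add_le _ _

lemma l1_smul_le (c : MonoidAlgebra ℤ G) (x : Fin r →₀ MonoidAlgebra ℤ G) :
    l1 (c • x) ≤ l1Norm c * l1 x := by
  simp only [l1_eq_sum, Finsupp.smul_apply, smul_eq_mul, mul_sum]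
  exact sum_le_sum fun i _ => l1Norm_mul_le _ _

lemma l1_map_le {s : ℕ}
    (ψ : (Fin r →₀ MonoidAlgebra ℤ G) →ₗ[MonoidAlgebra ℤ G] (Fin s →₀ MonoidAlgebra ℤ G))
    (x : Fin r →₀ MonoidAlgebra ℤ G) :
    l1 (ψ x) ≤ (univ.sup fun i => l1 (ψ (Finsupp.single i 1))) * l1 x := by
  conv_lhs => rw [← Finsupp.univ_sum_single x]
  rw [map_sum]
  refine (le_sum_of_subadditive l1 l1_zero.le l1_add_le _ _).trans ?_
  rw [l1_eq_sum, mul_sum]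
  refine sum_le_sum fun i _ => ?_
  rw [← Finsupp.smul_single_one, map_smul]
  refine (l1_smul_le _ _).trans ?_
  rw [mul_comm]
  exact Nat.mul_le_mul_right _ (le_sup (f := fun i => l1 (ψ (Finsupp.single i 1))) (mem_univ i))

end FreeModule

section FillingNorm

variable {G : Type*} [Group G] {r : ℕ} {M : Type*} [AddCommGroup M]
  [Module (MonoidAlgebra ℤ G) M] {η : (Fin r →₀ MonoidAlgebra ℤ G) →ₗ[MonoidAlgebra ℤ G] M}

lemma fillNorm_le_l1 {x : Fin r →₀ MonoidAlgebra ℤ G} {m : M} (h : η x = m) :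
    fillNorm η m ≤ l1 x :=
  Nat.sInf_le ⟨x, h, rfl⟩

lemma exists_l1_eq_fillNorm (hη : Function.Surjective η) (m : M) :
    ∃ x, η x = m ∧ l1 x = fillNorm η m :=
  Nat.sInf_mem (s := {n | ∃ x, η x = m ∧ l1 x = n}) <|
    let ⟨x, hx⟩ := hη m; ⟨l1 x, x, hx, rfl⟩

end FillingNorm

theorem morphism_with_projective_domain_is_bounded_general
    (G : Type*) [Group G]
    (P Q : Type*) [AddCommGroup P] [Module (MonoidAlgebra ℤ G) P]
    [AddCommGroup Q] [Module (MonoidAlgebra ℤ G) Q]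
    (a b : ℕ)
    (ηP : (Fin a →₀ MonoidAlgebra ℤ G) →ₗ[MonoidAlgebra ℤ G] P)
    (hηP : Function.Surjective ηP)
    (ηQ : (Fin b →₀ MonoidAlgebra ℤ G) →ₗ[MonoidAlgebra ℤ G] Q)
    (hηQ : Function.Surjective ηQ)
    (φ : P →ₗ[MonoidAlgebra ℤ G] Q) :
    ∃ C : ℕ, 0 < C ∧ ∀ p : P, fillNorm ηQ (φ p) ≤ C * fillNorm ηP p := by
  obtain ⟨ψ, hψ⟩ := Module.projective_lifting_property ηQ (φ ∘ₗ ηP) hηQ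
  set K := univ.sup fun i => l1 (ψ (Finsupp.single i 1))
  refine ⟨K + 1, K.succ_pos, fun p => ?_⟩
  obtain ⟨x, rfl, hx⟩ := exists_l1_eq_fillNorm hηP p
  calc fillNorm ηQ (φ (ηP x)) ≤ l1 (ψ x) := fillNorm_le_l1 (LinearMap.congr_fun hψ x)
    _ ≤ K * l1 x := l1_map_le ψ x
    _ ≤ (K + 1) * fillNorm ηP (ηP x) := by rw [hx]; gcongr; omega

/-- A `ℤ[G]`-morphism from a finitely generated projective module to a finitely
generated module is bounded with respect to filling norms. -/
theorem morphism_with_projective_domain_is_bounded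
    (G : Type*) [Group G]
    (P Q : Type*) [AddCommGroup P] [Module (MonoidAlgebra ℤ G) P]
    [AddCommGroup Q] [Module (MonoidAlgebra ℤ G) Q]
    [Module.Finite (MonoidAlgebra ℤ G) P] [Module.Finite (MonoidAlgebra ℤ G) Q]
    [Module.Projective (MonoidAlgebra ℤ G) P]
    (a b : ℕ)
    (ηP : (Fin a →₀ MonoidAlgebra ℤ G) →ₗ[MonoidAlgebra ℤ G] P)
    (hηP : Function.Surjective ηP)
    (ηQ : (Fin b →₀ MonoidAlgebra ℤ G) →ₗ[MonoidAlgebra ℤ G] Q)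
    (hηQ : Function.Surjective ηQ)
    (φ : P →ₗ[MonoidAlgebra ℤ G] Q) :
    ∃ C : ℕ, 0 < C ∧ ∀ p : P, fillNorm ηQ (φ p) ≤ C * fillNorm ηP p :=
  morphism_with_projective_domain_is_bounded_general G P Q a b ηP hηP ηQ hηQ φ
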